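/- arXiv:1902.04160 — 6 statements merged into one kernel-verified Lean document; each statement's English description precedes it below -/
import Mathlib

section
/- Let L be a first-order language with no relation symbols and let A be an idempotent L-structure (f^A(a, ..., a) = a for every function symbol f and every a ∈ A). Suppose there are index sets I and J, families (δ_i)_{i∈I}, (ε_i)_{i∈I} of L-terms in one variable, and a family (ρ_j)_{j∈J} of L-terms in two variables such that for all a, b ∈ A: ( for all i ∈ I and j ∈ J, δ_i^A(ρ_j^A(a,b)) = ε_i^A(ρ_j^A(a,b)) ) holds if and only if a = b. Then A has at most one element. -/
open FirstOrder FirstOrder.Language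

lemma term_realize_const_of_idempotent
    {L : FirstOrder.Language} {A : Type*} [L.Structure A]
    (hid : ∀ (m : ℕ) (f : L.Functions m) (a : A),
      Structure.funMap f (fun _ : Fin m => a) = a)
    {α : Type*} (t : L.Term α) (c : A) :
    t.realize (fun _ => c) = c := by
  induction t with
  | var => rfl
  | func f args ih =>
      simp only [Term.realize]
      simp only [ih]
      exact hid _ f c

/-- A nontrivial idempotent structure cannot validate the
algebraizing formula `(⋀_{i,j} δᵢ(ρⱼ(x,y)) ≈ εᵢ(ρⱼ(x,y))) ⟺ x ≈ y`;
i.e., if an idempotent structure validates it, it has at most one element. -/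
theorem subsingleton_of_idempotent_algebraizable
    (L : FirstOrder.Language) (A : Type*) [L.Structure A]
    (hrel : ∀ n : ℕ, IsEmpty (L.Relations n))
    (hid : ∀ (m : ℕ) (f : L.Functions m) (a : A),
      Structure.funMap f (fun _ : Fin m => a) = a)
    (I J : Type*)
    (δ ε : I → L.Term (Fin 1)) (ρ : J → L.Term (Fin 2))
    (halg : ∀ a b : A,
      (∀ (i : I) (j : J),
          (δ i).realize (fun _ : Fin 1 => (ρ j).realize ![a, b]) =
            (ε i).realize (fun _ : Fin 1 => (ρ j).realize ![a, b])) ↔ a = b) :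
    Subsingleton A := by
  constructor
  intro a b
  rw [← halg a b]
  intro i j
  rw [term_realize_const_of_idempotent hid, term_realize_const_of_idempotent hid]
end

section
/- Let L be a first-order language with no relation symbols, let A be an L-structure, and let α, β be binary relations on A. If (a,c) and (b,d) both belong to Θ_A(α ∪ β), the smallest congruence of A containing α ∪ β, then ((a,b),(c,d)) belongs to Θ_{A^[2]}((α⊗α) ∪ (β⊗β)), the smallest congruence of the second matrix power A^[2] containing (α⊗α) ∪ (β⊗β). -/
/-! A congruence `r` of `A^[2]` pulls back along the diagonal `x ↦ (x, x)` to a congruence of `A`,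
which contains `α ∪ β` as soon as `r` contains `(α ⊗ α) ∪ (β ⊗ β)`. Hence `(a, a) r (c, c)` and
`(b, b) r (d, d)`, and the binary operation `((x₁, x₂), (y₁, y₂)) ↦ (x₁, y₂)` of `A^[2]` turns these
into `(a, b) r (c, d)`. -/

open FirstOrder FirstOrder.Language

/-- `α ⊗ β`: the binary relation on `A × A` relating `(a,b)` to `(c,d)` iff
`(a,c) ∈ α` and `(b,d) ∈ β`. -/
def otimes {A : Type*} (α β : Set (A × A)) : Set ((A × A) × (A × A)) :=
  {p | (p.1.1, p.2.1) ∈ α ∧ (p.1.2, p.2.2) ∈ β}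

/-- The `k`-ary operation `m_t` of the second matrix power `A^[2]`,
determined by a pair `t = (t₁, t₂)` of `L`-terms in `2k` variables
(the variables being indexed by `Fin k × Fin 2`, so that the variable `(j, i)`
receives the `i`-th coordinate of the `j`-th argument). -/
def mOp2 {L : FirstOrder.Language} {A : Type*} [L.Structure A] {k : ℕ}
    (t₁ t₂ : L.Term (Fin k × Fin 2)) (x : Fin k → A × A) : A × A :=
  (t₁.realize (fun p => ![(x p.1).1, (x p.1).2] p.2),
   t₂.realize (fun p => ![(x p.1).1, (x p.1).2] p.2))

/-- A congruence of an `L`-structure `A`: an equivalence relation compatible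
with every basic operation. -/
def IsCongruence (L : FirstOrder.Language) (A : Type*) [L.Structure A]
    (r : Set (A × A)) : Prop :=
  Equivalence (fun a b : A => (a, b) ∈ r) ∧
    ∀ (m : ℕ) (f : L.Functions m) (x y : Fin m → A),
      (∀ i, (x i, y i) ∈ r) →
        (Structure.funMap f x, Structure.funMap f y) ∈ r

/-- A congruence of the second matrix power `A^[2]`: an equivalence relation on
`A × A` compatible with every operation `m_t` (for every positive `k` and every
pair of terms in `2k` variables). -/
def IsCongruence2 (L : FirstOrder.Language) (A : Type*) [L.Structure A]
    (r : Set ((A × A) × (A × A))) : Prop :=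
  Equivalence (fun u v : A × A => (u, v) ∈ r) ∧
    ∀ (k : ℕ), 0 < k → ∀ (t₁ t₂ : L.Term (Fin k × Fin 2)) (x y : Fin k → A × A),
      (∀ j, (x j, y j) ∈ r) → (mOp2 t₁ t₂ x, mOp2 t₁ t₂ y) ∈ r


/-- The smallest congruence of `A` containing a binary relation `ρ`
(the congruence generated by `ρ`, `Θ_A(ρ)`). -/
def congClosure (L : FirstOrder.Language) (A : Type*) [L.Structure A]
    (ρ : Set (A × A)) : Set (A × A) :=
  {p | ∀ r : Set (A × A), IsCongruence L A r → ρ ⊆ r → p ∈ r}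

/-- The smallest congruence of the second matrix power `A^[2]` containing a
binary relation `ρ` on `A × A` (`Θ_{A^[2]}(ρ)`). -/
def congClosure2 (L : FirstOrder.Language) (A : Type*) [L.Structure A]
    (ρ : Set ((A × A) × (A × A))) : Set ((A × A) × (A × A)) :=
  {p | ∀ r : Set ((A × A) × (A × A)), IsCongruence2 L A r → ρ ⊆ r → p ∈ r}

section

variable {L : FirstOrder.Language} {A : Type*} [L.Structure A]

def diagComap (r : Set ((A × A) × (A × A))) : Set (A × A) :=
  {p | ((p.1, p.1), (p.2, p.2)) ∈ r}

theorem subset_diagComap_of_otimes_subset {ρ : Set (A × A)} {r : Set ((A × A) × (A × A))}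
    (h : otimes ρ ρ ⊆ r) : ρ ⊆ diagComap r :=
  fun _ hp => h ⟨hp, hp⟩

theorem mOp2_func_diag {m : ℕ} (f : L.Functions m) (x : Fin m → A) :
    mOp2 (Term.func f fun i => Term.var (i, 0)) (Term.func f fun i => Term.var (i, 0))
      (fun i => (x i, x i)) = (Structure.funMap f x, Structure.funMap f x) := by
  simp [mOp2, Term.realize]

namespace IsCongruence2

variable {r : Set ((A × A) × (A × A))}

theorem isCongruence_diagComap (hr : IsCongruence2 L A r) : IsCongruence L A (diagComap r) := by
  obtain ⟨hEq, hOp⟩ := hr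
  refine ⟨⟨fun _ => hEq.refl _, hEq.symm, hEq.trans⟩, fun m f x y hxy => ?_⟩
  -- `A^[2]` only has operations of positive arity, so constants are treated separately.
  rcases Nat.eq_zero_or_pos m with rfl | hm
  · rw [Subsingleton.elim x y]
    exact hEq.refl _
  · have := hOp m hm (Term.func f fun i => Term.var (i, 0)) (Term.func f fun i => Term.var (i, 0))
      (fun i => (x i, x i)) (fun i => (y i, y i)) hxy
    rwa [mOp2_func_diag, mOp2_func_diag] at this

theorem mk_mem_of_diag_mem (hr : IsCongruence2 L A r) {a b c d : A}
    (hac : ((a, a), (c, c)) ∈ r) (hbd : ((b, b), (d, d)) ∈ r) : ((a, b), (c, d)) ∈ r := by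
  have hx : ∀ j : Fin 2, (![(a, a), (b, b)] j, ![(c, c), (d, d)] j) ∈ r := by
    intro j
    fin_cases j
    exacts [hac, hbd]
  simpa [mOp2, Term.realize] using
    hr.2 2 two_pos (Term.var (0, 0)) (Term.var (1, 1)) _ _ hx

end IsCongruence2

end

theorem mem_congClosure2_of_mem_congClosure_general
    (L : FirstOrder.Language) (A : Type*) [L.Structure A]
    (α β : Set (A × A)) (a b c d : A)
    (h1 : (a, c) ∈ congClosure L A (α ∪ β))
    (h2 : (b, d) ∈ congClosure L A (α ∪ β)) :
    ((a, b), (c, d)) ∈ congClosure2 L A (otimes α α ∪ otimes β β) := by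
  intro r hr hsub
  have hdiag : α ∪ β ⊆ diagComap r :=
    Set.union_subset
      (subset_diagComap_of_otimes_subset (Set.subset_union_left.trans hsub))
      (subset_diagComap_of_otimes_subset (Set.subset_union_right.trans hsub))
  exact hr.mk_mem_of_diag_mem (h1 _ hr.isCongruence_diagComap hdiag)
    (h2 _ hr.isCongruence_diagComap hdiag)

/-- if `(a,c)` and `(b,d)` lie in `Θ_A(α ∪ β)`, then
`((a,b),(c,d))` lies in `Θ_{A^[2]}((α⊗α) ∪ (β⊗β))`. -/
theorem mem_congClosure2_of_mem_congClosure
    (L : FirstOrder.Language) (A : Type*) [L.Structure A]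
    (hrel : ∀ n : ℕ, IsEmpty (L.Relations n))
    (α β : Set (A × A)) (a b c d : A)
    (h1 : (a, c) ∈ congClosure L A (α ∪ β))
    (h2 : (b, d) ∈ congClosure L A (α ∪ β)) :
    ((a, b), (c, d)) ∈ congClosure2 L A (otimes α α ∪ otimes β β) :=
  mem_congClosure2_of_mem_congClosure_general L A α β a b c d h1 h2
end

section
/- Let L be a first-order language with no relation symbols, let A be an L-structure, and let α, β be binary relations on A. Then Θ_{A^[2]}((α⊗α) ∪ (β⊗β)) = Θ_A(α ∪ β) ⊗ Θ_A(α ∪ β). That is, the map λ(α) = α⊗α from binary relations on A to binary relations on A×A satisfies λ(α) ∨ λ(β) = λ(α ∨ β), where μ ∨ ν denotes the smallest congruence (of A^[2], respectively of A) containing μ ∪ ν. -/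
open FirstOrder FirstOrder.Language

section Aux

variable {L : FirstOrder.Language} {A : Type*} [L.Structure A]

lemma term_pres {r : Set (A × A)} (hr : IsCongruence L A r) {γ : Type*}
    (t : L.Term γ) (x y : γ → A) (h : ∀ i, (x i, y i) ∈ r) :
    (t.realize x, t.realize y) ∈ r := by
  induction t with
  | var i => exact h i
  | func f ts ih =>
    simp only [Term.realize]
    exact hr.2 _ f _ _ fun i => ih i

lemma isCongruence_congClosure (ρ : Set (A × A)) :
    IsCongruence L A (congClosure L A ρ) := by
  refine ⟨⟨?_, ?_, ?_⟩, ?_⟩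
  · intro a r hr _; exact hr.1.refl a
  · intro a b h r hr hs; exact hr.1.symm (h r hr hs)
  · intro a b c h1 h2 r hr hs; exact hr.1.trans (h1 r hr hs) (h2 r hr hs)
  · intro m f x y h r hr hs
    exact hr.2 m f x y fun i => h i r hr hs

lemma subset_congClosure (ρ : Set (A × A)) : ρ ⊆ congClosure L A ρ :=
  fun _ hp _ _ hs => hs hp

/-- The "diagonal trace" of a congruence of the matrix power is a
congruence of `A`. -/
lemma diag_isCongruence {r : Set ((A × A) × (A × A))}
    (hr : IsCongruence2 L A r) :
    IsCongruence L A {p : A × A | ((p.1, p.1), (p.2, p.2)) ∈ r} := by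
  refine ⟨⟨?_, ?_, ?_⟩, ?_⟩
  · intro a; exact hr.1.refl _
  · intro a b h; exact hr.1.symm h
  · intro a b c h1 h2; exact hr.1.trans h1 h2
  · intro m f x y h
    rcases Nat.eq_zero_or_pos m with hm | hm
    · subst hm
      have : x = y := funext fun i => absurd i.2 (by simp)
      subst this
      exact hr.1.refl _
    · have := hr.2 m hm
        (Term.func f (fun i => Term.var (i, (0 : Fin 2))))
        (Term.func f (fun i => Term.var (i, (1 : Fin 2))))
        (fun i => (x i, x i)) (fun i => (y i, y i)) (fun j => h j)
      simpa [mOp2, Term.realize] using this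

end Aux

/-- the congruence of `A^[2]` generated by `(α⊗α) ∪ (β⊗β)` is
exactly `Θ_A(α ∪ β) ⊗ Θ_A(α ∪ β)`; i.e., the map `λ(α) = α⊗α` satisfies
`λ(α) ∨ λ(β) = λ(α ∨ β)` for the congruence-generation joins. -/
theorem congClosure2_otimes_union
    (L : FirstOrder.Language) (A : Type*) [L.Structure A]
    (hrel : ∀ n : ℕ, IsEmpty (L.Relations n))
    (α β : Set (A × A)) :
    congClosure2 L A (otimes α α ∪ otimes β β) =
      otimes (congClosure L A (α ∪ β)) (congClosure L A (α ∪ β)) := by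
  set θ := congClosure L A (α ∪ β) with hθ
  have hθc : IsCongruence L A θ := isCongruence_congClosure _
  apply Set.Subset.antisymm
  · -- θ ⊗ θ is a congruence of A^[2] containing (α⊗α) ∪ (β⊗β)
    intro p hp
    apply hp
    · refine ⟨⟨?_, ?_, ?_⟩, ?_⟩
      · intro u; exact ⟨hθc.1.refl _, hθc.1.refl _⟩
      · intro u v h; exact ⟨hθc.1.symm h.1, hθc.1.symm h.2⟩
      · intro u v w h1 h2; exact ⟨hθc.1.trans h1.1 h2.1, hθc.1.trans h1.2 h2.2⟩
      · intro k _ t₁ t₂ x y h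
        have key : ∀ q : Fin k × Fin 2,
            ((fun p => ![(x p.1).1, (x p.1).2] p.2) q,
             (fun p => ![(y p.1).1, (y p.1).2] p.2) q) ∈ θ := by
          rintro ⟨j, i⟩
          fin_cases i
          · exact (h j).1
          · exact (h j).2
        exact ⟨term_pres hθc t₁ _ _ key, term_pres hθc t₂ _ _ key⟩
    · rintro ⟨⟨a, b⟩, ⟨c, d⟩⟩ (⟨h1, h2⟩ | ⟨h1, h2⟩)
      · exact ⟨subset_congClosure _ (Or.inl h1), subset_congClosure _ (Or.inl h2)⟩
      · exact ⟨subset_congClosure _ (Or.inr h1), subset_congClosure _ (Or.inr h2)⟩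
  · rintro ⟨⟨a, b⟩, ⟨c, d⟩⟩ ⟨hac, hbd⟩ r hr hs
    -- the diagonal trace of r is a congruence containing α ∪ β
    have hdiag : α ∪ β ⊆ {p : A × A | ((p.1, p.1), (p.2, p.2)) ∈ r} := by
      rintro ⟨u, v⟩ (h | h)
      · exact hs (Or.inl ⟨h, h⟩)
      · exact hs (Or.inr ⟨h, h⟩)
    have h1 : ((a, a), (c, c)) ∈ r := hac _ (diag_isCongruence hr) hdiag
    have h2 : ((b, b), (d, d)) ∈ r := hbd _ (diag_isCongruence hr) hdiag
    have := hr.2 2 (by norm_num)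
      (Term.var ((0 : Fin 2), (0 : Fin 2))) (Term.var ((1 : Fin 2), (1 : Fin 2)))
      ![(a, a), (b, b)] ![(c, c), (d, d)]
      (fun j => by fin_cases j <;> simpa using ‹_›)
    simpa [mOp2, Term.realize] using this
end

section
/- Let L be a first-order language with no relation symbols, let A and B be L-structures, and let n be a positive integer. The map sending a function h : A → B to its componentwise extension hⁿ : Aⁿ → Bⁿ restricts to a bijection between the set of L-homomorphisms from A to B and the set of homomorphisms from the matrix power A^[n] to the matrix power B^[n] (functions g : Aⁿ → Bⁿ satisfying g(m_t^{A^[n]}(x₁,...,x_k)) = m_t^{B^[n]}(g(x₁),...,g(x_k)) for every positive integer k and every n-tuple t of L-terms in kn variables). -/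
open FirstOrder FirstOrder.Language

/-- The `k`-ary operation `m_t` of the `n`-th matrix power `A^[n]`, determined
by an `n`-tuple `t` of `L`-terms in `kn` variables (the variables indexed by
`Fin k × Fin n`, the variable `(j, i)` receiving the `i`-th coordinate of the
`j`-th argument). -/
def matrixOp {L : FirstOrder.Language} {A : Type*} [L.Structure A] {n k : ℕ}
    (t : Fin n → L.Term (Fin k × Fin n)) (x : Fin k → Fin n → A) : Fin n → A :=
  fun i => (t i).realize fun p => x p.1 p.2

/-- `h : A → B` is an `L`-homomorphism. -/
def IsHom (L : FirstOrder.Language) {A B : Type*} [L.Structure A]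
    [L.Structure B] (h : A → B) : Prop :=
  ∀ (m : ℕ) (f : L.Functions m) (a : Fin m → A),
    h (Structure.funMap f a) = Structure.funMap f (h ∘ a)

/-- `g : Aⁿ → Bⁿ` is a homomorphism of `n`-th matrix powers: it commutes with
`m_t` for every positive `k` and every `n`-tuple `t` of terms in `kn`
variables. -/
def IsMatrixHom (L : FirstOrder.Language) {A B : Type*} [L.Structure A]
    [L.Structure B] (n : ℕ) (g : (Fin n → A) → (Fin n → B)) : Prop :=
  ∀ (k : ℕ), 0 < k → ∀ (t : Fin n → L.Term (Fin k × Fin n))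
    (x : Fin k → Fin n → A),
      g (matrixOp t x) = matrixOp t (fun j => g (x j))

private lemma realize_comm {L : FirstOrder.Language} {A B : Type*} [L.Structure A]
    [L.Structure B] {h : A → B} (hh : IsHom L h) {α : Type*} (t : L.Term α)
    (v : α → A) : h (t.realize v) = t.realize (h ∘ v) := by
  induction t with
  | var => rfl
  | func f ts ih =>
    simp only [Term.realize, hh _ f]
    congr 1
    funext j
    exact ih j

/-- `h ↦ hⁿ` (componentwise extension) is a bijection between the
set of `L`-homomorphisms `A → B` and the set of homomorphisms
`A^[n] → B^[n]`. -/
theorem matrix_power_hom_bijection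
    (L : FirstOrder.Language) (A B : Type*) [L.Structure A] [L.Structure B]
    (hrel : ∀ m : ℕ, IsEmpty (L.Relations m)) (n : ℕ) (hn : 0 < n) :
    Set.BijOn (fun (h : A → B) => fun (a : Fin n → A) => h ∘ a)
      {h | IsHom L h} {g | IsMatrixHom L n g} := by
  refine ⟨?_, ?_, ?_⟩
  · -- MapsTo
    intro h hh k hk t x
    funext i
    exact realize_comm hh (t i) _
  · -- InjOn
    intro h1 _ h2 _ heq
    funext a
    exact congrFun (congrFun heq (fun _ => a)) ⟨0, hn⟩
  · -- SurjOn
    intro g hg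
    refine ⟨fun b => g (fun _ => b) ⟨0, hn⟩, ?_, ?_⟩
    · -- the diagonal map is an L-hom
      intro m f a
      set c := Structure.funMap f a with hc
      set x : Fin (m + 1) → Fin n → A :=
        fun j _ => if hj : (j : ℕ) < m then a ⟨j, hj⟩ else c with hx
      set t : Fin n → L.Term (Fin (m + 1) × Fin n) :=
        fun i => Term.func f (fun j => Term.var (Fin.castSucc j, i)) with ht
      have hmx : matrixOp t x = fun _ => c := by
        funext i
        simp only [matrixOp, ht, Term.realize, hx, hc]
        congr 1
        funext j
        simp [Fin.coe_castSucc, j.isLt]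
      have key := congrFun (hg (m + 1) (Nat.succ_pos m) t x) ⟨0, hn⟩
      rw [hmx] at key
      refine key.trans ?_
      simp only [matrixOp, ht, Term.realize]
      congr 1
      funext j
      simp only [Term.realize, hx, Function.comp]
      congr 1
      funext i
      simp [Fin.coe_castSucc, j.isLt]
    · -- hⁿ = g
      funext y
      funext i
      have key := congrFun (hg 1 one_pos
        (fun _ => Term.var ((0 : Fin 1), i)) (fun _ => y)) ⟨0, hn⟩
      exact key
end

section
/- Let L be a first-order language with no relation symbols, let A be an L-structure, and let n be a positive integer. For a nonempty subset S ⊆ Aⁿ, the following are equivalent: (i) S is closed under all operations of the matrix power A^[n], i.e., m_t(a₁,...,a_k) ∈ S whenever a₁,...,a_k ∈ S, for every positive integer k and every n-tuple t of L-terms in kn variables; (ii) S = Bⁿ for some nonempty subset B ⊆ A that is closed under f^A for every function symbol f of L. -/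
open FirstOrder FirstOrder.Language

/-- for a nonempty `S ⊆ Aⁿ`, `S` is closed under all the
operations of the matrix power `A^[n]` iff `S = Bⁿ` for some nonempty subset
`B ⊆ A` closed under all the basic operations of `A`. -/
theorem matrix_power_subuniverse
    (L : FirstOrder.Language) (A : Type*) [L.Structure A]
    (hrel : ∀ m : ℕ, IsEmpty (L.Relations m)) (n : ℕ) (hn : 0 < n)
    (S : Set (Fin n → A)) (hS : S.Nonempty) :
    (∀ (k : ℕ), 0 < k → ∀ (t : Fin n → L.Term (Fin k × Fin n))
        (x : Fin k → Fin n → A), (∀ j, x j ∈ S) → matrixOp t x ∈ S) ↔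
      ∃ B : Set A, B.Nonempty ∧
        (∀ (m : ℕ) (f : L.Functions m) (a : Fin m → A),
          (∀ i, a i ∈ B) → Structure.funMap f a ∈ B) ∧
        S = {x : Fin n → A | ∀ i, x i ∈ B} := by
  constructor
  · intro h
    set i0 : Fin n := ⟨0, hn⟩ with hi0
    refine ⟨{a | ∃ x ∈ S, ∃ i, x i = a}, ?_, ?_, ?_⟩
    · obtain ⟨s, hs⟩ := hS
      exact ⟨s i0, s, hs, i0, rfl⟩
    · intro m f a ha
      choose w hw j hj using ha
      obtain ⟨s, hs⟩ := hS
      set x : Fin (m + 1) → Fin n → A := Fin.cases s w with hx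
      have hxS : ∀ jj, x jj ∈ S := by
        intro jj
        induction jj using Fin.cases with
        | zero => simpa [hx] using hs
        | succ l => simpa [hx] using hw l
      set t : Fin n → L.Term (Fin (m + 1) × Fin n) := fun i =>
        if i = i0 then Term.func f (fun l => Term.var (l.succ, j l))
        else Term.var (0, i) with ht
      have hmem : matrixOp t x ∈ S := h (m + 1) (Nat.succ_pos m) t x hxS
      refine ⟨matrixOp t x, hmem, i0, ?_⟩
      have : matrixOp t x i0 = Structure.funMap f a := by
        simp only [matrixOp, ht, if_pos rfl, Term.realize_func, Term.realize_var]
        congr 1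
        funext l
        simp [hx, hj l]
      rw [this]
    · ext y
      constructor
      · intro hy i
        exact ⟨y, hy, i, rfl⟩
      · intro hy
        choose w hw j hj using hy
        have : matrixOp (fun i => (Term.var (i, j i) : L.Term (Fin n × Fin n))) w ∈ S :=
          h n hn _ w hw
        have heq : matrixOp (fun i => (Term.var (i, j i) : L.Term (Fin n × Fin n))) w = y := by
          funext i
          simp [matrixOp, Term.realize_var, hj i]
        rwa [heq] at this
  · rintro ⟨B, hB, hBcl, rfl⟩
    intro k hk t x hx
    intro i
    have : ∀ (t' : L.Term (Fin k × Fin n)), t'.realize (fun p => x p.1 p.2) ∈ B := by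
      intro t'
      induction t' with
      | var p => exact hx p.1 p.2
      | func f ts ih =>
        simpa [Term.realize_func] using hBcl _ f _ (fun l => ih l)
    exact this (t i)
end

section
/- Let L be a first-order language with no relation symbols and let A be an L-structure. There exist pairs t→ and t← of L-terms in 4 variables and a pair t□ of L-terms in 2 variables (built only from variables, i.e., projection terms) such that the corresponding operations of the second matrix power A^[2] are: (a,b) → (c,d) = (a,c), (a,b) ← (c,d) = (b,d), and □(a,b) = (b,a); and for all u, v ∈ A×A the following biconditional holds: ( u → v = □(u → v) and u ← v = □(u ← v) ) if and only if u = v. Hence A^[2] satisfies the algebraizing formula (x→y ≈ □(x→y) & x←y ≈ □(x←y)) ⟺ x ≈ y with transformers τ(x) = {⟨x, □x⟩} and ρ(x,y) = {x→y, x←y}. -/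
open FirstOrder FirstOrder.Language

/-- there are pairs of projection (variable) terms giving
operations `→`, `←`, `□` of the second matrix power `A^[2]` with
`(a,b) → (c,d) = (a,c)`, `(a,b) ← (c,d) = (b,d)`, `□(a,b) = (b,a)`, such that
`A^[2]` validates the algebraizing formula
`(x→y ≈ □(x→y) & x←y ≈ □(x←y)) ⟺ x ≈ y`. -/
theorem matrix_power_algebraizing
    (L : FirstOrder.Language) (A : Type*) [L.Structure A]
    (hrel : ∀ m : ℕ, IsEmpty (L.Relations m)) :
    ∃ (i₁ i₂ j₁ j₂ : Fin 2 × Fin 2) (m₁ m₂ : Fin 1 × Fin 2),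
      (∀ u v : A × A,
          mOp2 (L := L) (Term.var i₁) (Term.var i₂) ![u, v] = (u.1, v.1)) ∧
      (∀ u v : A × A,
          mOp2 (L := L) (Term.var j₁) (Term.var j₂) ![u, v] = (u.2, v.2)) ∧
      (∀ u : A × A,
          mOp2 (L := L) (Term.var m₁) (Term.var m₂) ![u] = (u.2, u.1)) ∧
      (∀ u v : A × A,
        (mOp2 (L := L) (Term.var i₁) (Term.var i₂) ![u, v] =
            mOp2 (L := L) (Term.var m₁) (Term.var m₂)
              ![mOp2 (L := L) (Term.var i₁) (Term.var i₂) ![u, v] ] ∧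
          mOp2 (L := L) (Term.var j₁) (Term.var j₂) ![u, v] =
            mOp2 (L := L) (Term.var m₁) (Term.var m₂)
              ![mOp2 (L := L) (Term.var j₁) (Term.var j₂) ![u, v] ]) ↔
        u = v) := by
  refine ⟨(0,0),(1,0),(0,1),(1,1),(0,1),(0,0), ?_, ?_, ?_, ?_⟩
  · intro u v; rfl
  · intro u v; rfl
  · intro u; rfl
  · intro u v
    simp only [mOp2, Term.realize_var, Prod.mk.injEq, Prod.ext_iff]
    constructor
    · rintro ⟨⟨h1,h2⟩,⟨h3,h4⟩⟩
      simp_all [Matrix.cons_val_zero, Matrix.cons_val_one]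
    · rintro ⟨h1,h2⟩; simp_all
end
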